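/- In the algebra Ũ(χ), for i, j, k ∈ I pairwise satisfying i ≠ j, j ≠ k, k ≠ i, and any m, n ∈ Z≥0, the commutator [Ẽ^+_{m,α_i,α_j}, F̃^+_{n,α_i,α_k}] = 0. -/

import Mathlib

/-- `ℤΠ`, the free `ℤ`-module with basis `Π = {α_1,…,α_N}`. -/
abbrev Mz (N : ℕ) := Fin N →₀ ℤ

/-- The simple root `α_i`. -/
noncomputable def alphav {N : ℕ} (i : Fin N) : Mz N := Finsupp.single i 1

/-- A bi-homomorphism `χ : ℤΠ × ℤΠ → ℂ*`. -/
def IsBihom {N : ℕ} (χ : Mz N → Mz N → ℂˣ) : Prop :=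
  (∀ a b c : Mz N, χ a (b + c) = χ a b * χ a c) ∧
  (∀ a b c : Mz N, χ (a + b) c = χ a c * χ b c)

/-- `(m)_t := 1 + t + ⋯ + t^{m-1}`. -/
noncomputable def qnum (m : ℕ) (t : ℂ) : ℂ := ∑ j ∈ Finset.range m, t ^ j

/-- `(m)_t! := ∏_{j=1}^m (j)_t`. -/
noncomputable def qfact (m : ℕ) (t : ℂ) : ℂ := ∏ j ∈ Finset.range m, qnum (j + 1) t

/-- `(m; t₁, t₂)! := ∏_{j=1}^m (1 - t₁^{j-1} t₂)`. -/
noncomputable def tfact (m : ℕ) (t₁ t₂ : ℂ) : ℂ := ∏ j ∈ Finset.range m, (1 - t₁ ^ j * t₂)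

/-- Generators of the algebra `Ũ(χ)`: `K̃_α, L̃_α (α ∈ ℤΠ)`, `Ẽ_i, F̃_i (i ∈ I)`. -/
inductive Gen (N : ℕ)
  | K : Mz N → Gen N
  | L : Mz N → Gen N
  | E : Fin N → Gen N
  | F : Fin N → Gen N

/-- The free `ℂ`-algebra on the generators. -/
abbrev FA (N : ℕ) := FreeAlgebra ℂ (Gen N)

/-- Embedding of a generator into the free algebra. -/
noncomputable def gen {N : ℕ} (x : Gen N) : FA N := FreeAlgebra.ι ℂ x

/-- The defining relations of `Ũ(χ)`. -/
inductive URel {N : ℕ} (χ : Mz N → Mz N → ℂˣ) : FA N → FA N → Prop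
  | K0 : URel χ (gen (Gen.K 0)) 1
  | L0 : URel χ (gen (Gen.L 0)) 1
  | KK (a b : Mz N) : URel χ (gen (Gen.K a) * gen (Gen.K b)) (gen (Gen.K (a + b)))
  | LL (a b : Mz N) : URel χ (gen (Gen.L a) * gen (Gen.L b)) (gen (Gen.L (a + b)))
  | KL (a b : Mz N) : URel χ (gen (Gen.K a) * gen (Gen.L b)) (gen (Gen.L b) * gen (Gen.K a))
  | KE (a : Mz N) (i : Fin N) : URel χ (gen (Gen.K a) * gen (Gen.E i))
      ((χ a (alphav i) : ℂ) • (gen (Gen.E i) * gen (Gen.K a)))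
  | LE (a : Mz N) (i : Fin N) : URel χ (gen (Gen.L a) * gen (Gen.E i))
      ((χ (-alphav i) a : ℂ) • (gen (Gen.E i) * gen (Gen.L a)))
  | KF (a : Mz N) (i : Fin N) : URel χ (gen (Gen.K a) * gen (Gen.F i))
      ((χ a (-alphav i) : ℂ) • (gen (Gen.F i) * gen (Gen.K a)))
  | LF (a : Mz N) (i : Fin N) : URel χ (gen (Gen.L a) * gen (Gen.F i))
      ((χ (alphav i) a : ℂ) • (gen (Gen.F i) * gen (Gen.L a)))
  | EF (i j : Fin N) : URel χ (gen (Gen.E i) * gen (Gen.F j) - gen (Gen.F j) * gen (Gen.E i))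
      (if i = j then -gen (Gen.K (alphav i)) + gen (Gen.L (alphav i)) else 0)

/-- The algebra `Ũ(χ)`. -/
abbrev tU {N : ℕ} (χ : Mz N → Mz N → ℂˣ) := RingQuot (URel χ)

/-- `K̃_α` in `Ũ(χ)`. -/
noncomputable def elK {N : ℕ} (χ : Mz N → Mz N → ℂˣ) (a : Mz N) : tU χ :=
  RingQuot.mkAlgHom ℂ (URel χ) (gen (Gen.K a))

/-- `L̃_α` in `Ũ(χ)`. -/
noncomputable def elL {N : ℕ} (χ : Mz N → Mz N → ℂˣ) (a : Mz N) : tU χ :=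
  RingQuot.mkAlgHom ℂ (URel χ) (gen (Gen.L a))

/-- `Ẽ_i` in `Ũ(χ)`. -/
noncomputable def elE {N : ℕ} (χ : Mz N → Mz N → ℂˣ) (i : Fin N) : tU χ :=
  RingQuot.mkAlgHom ℂ (URel χ) (gen (Gen.E i))

/-- `F̃_i` in `Ũ(χ)`. -/
noncomputable def elF {N : ℕ} (χ : Mz N → Mz N → ℂˣ) (i : Fin N) : tU χ :=
  RingQuot.mkAlgHom ℂ (URel χ) (gen (Gen.F i))

/-- Iterated root vector `Ẽ⁺_{m,α_i,α_j}`. -/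
noncomputable def Ep {N : ℕ} (χ : Mz N → Mz N → ℂˣ) (i j : Fin N) : ℕ → tU χ
  | 0 => elE χ j
  | (m + 1) => elE χ i * Ep χ i j m -
      ((χ (alphav i) (alphav i) : ℂ) ^ m * (χ (alphav i) (alphav j) : ℂ)) •
        (Ep χ i j m * elE χ i)

/-- Iterated root vector `F̃⁺_{m,α_i,α_j}`. -/
noncomputable def Fp {N : ℕ} (χ : Mz N → Mz N → ℂˣ) (i j : Fin N) : ℕ → tU χ
  | 0 => elF χ j
  | (m + 1) => elF χ i * Fp χ i j m -
      ((χ (alphav i) (alphav i) : ℂ) ^ m * (χ (alphav j) (alphav i) : ℂ)) •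
        (Fp χ i j m * elF χ i)

/-!
Among the generators of the subalgebras containing `Ẽ⁺_{m,α_i,α_j}` and `F̃⁺_{n,α_i,α_k}`, only
`Ẽ_i` and `F̃_i` fail to commute, with `[Ẽ_i, F̃_i] = -K̃_{α_i} + L̃_{α_i}`. In the commutator
`[Ẽ⁺_{m+1,α_i,α_j}, F̃_i]` the `K̃`-terms cancel exactly, because the coefficient
`χ(α_i,α_i)^m χ(α_i,α_j)` of the recursion for `Ẽ⁺` is the scalar by which `K̃_{α_i}`
skew-commutes with `Ẽ⁺_{m,α_i,α_j}`; what survives is a multiple of `Ẽ⁺_{m,α_i,α_j} L̃_{α_i}`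
(by induction on `m`, using `χ(-α_i,α_i) χ(α_i,α_i) = 1`). Moving `L̃_{α_i}` past
`F̃⁺_{n,α_i,α_k}` produces the scalar `χ(α_i,α_i)^n χ(α_k,α_i)`, which is exactly the coefficient of
the recursion for `F̃⁺`, so the two contributions cancel and a double induction on `m` and `n`
finishes the proof.
-/

section QCommute

variable {R A : Type*} [CommRing R] [Ring A] [Algebra R A]

def QCommute (q : R) (a b : A) : Prop :=
  a * b = q • (b * a)

namespace QCommute

variable {q r : R} {a b c : A}

theorem mul_right (hb : QCommute q a b) (hc : QCommute r a c) : QCommute (q * r) a (b * c) := by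
  unfold QCommute at *
  rw [← mul_assoc, hb, smul_mul_assoc, mul_assoc, hc, mul_smul_comm, smul_smul, mul_assoc]

theorem smul_right (h : QCommute q a b) (r : R) : QCommute q a (r • b) := by
  unfold QCommute at *
  rw [mul_smul_comm, h, smul_comm, smul_mul_assoc]

theorem sub_right (hb : QCommute q a b) (hc : QCommute q a c) : QCommute q a (b - c) := by
  unfold QCommute at *
  rw [mul_sub, hb, hc, sub_mul, smul_sub]

theorem of_recurrence {u v : R} {e y : A} {x : ℕ → A} {s : ℕ → R}
    (hx : ∀ m, x (m + 1) = e * x m - s m • (x m * e))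
    (he : QCommute u y e) (h0 : QCommute v y (x 0)) (m : ℕ) : QCommute (u ^ m * v) y (x m) := by
  induction m with
  | zero => simpa using h0
  | succ m ih =>
    rw [hx, pow_succ', mul_assoc]
    refine (he.mul_right ih).sub_right ?_
    rw [mul_comm u]
    exact (ih.mul_right he).smul_right _

end QCommute

theorem qCommute_one_iff {a b : A} : QCommute (1 : R) a b ↔ Commute a b := by
  rw [QCommute, one_smul]; rfl

theorem Commute.of_recurrence {e y : A} {x : ℕ → A} {s : ℕ → R}
    (hx : ∀ m, x (m + 1) = e * x m - s m • (x m * e))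
    (he : Commute y e) (h0 : Commute y (x 0)) (m : ℕ) : Commute y (x m) := by
  simpa [qCommute_one_iff] using
    QCommute.of_recurrence hx (qCommute_one_iff.2 he) (qCommute_one_iff.2 h0) m

theorem commutator_sub_smul_mul_eq {e f k l x : A} {s t : R} (hef : e * f - f * e = -k + l)
    (hk : QCommute s k x) (hl : QCommute t l x) :
    (e * x - s • (x * e)) * f - f * (e * x - s • (x * e)) =
      (t - s) • (x * l) + (e * (x * f - f * x) - s • ((x * f - f * x) * e)) := by
  have key : (e * x - s • (x * e)) * f - f * (e * x - s • (x * e)) =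
      (e * f - f * e) * x - s • (x * (e * f - f * e)) +
        (e * (x * f - f * x) - s • ((x * f - f * x) * e)) := by
    simp only [mul_sub, sub_mul, smul_sub, smul_mul_assoc, mul_smul_comm, mul_assoc]
    abel
  rw [key, hef]
  unfold QCommute at hk hl
  simp only [neg_add_eq_sub, sub_mul, mul_sub, hk, hl, smul_sub, sub_smul]
  abel

theorem Commute.mul_sub_smul_mul {f x y z l : A} {c q : R} (hxy : Commute x y)
    (hxf : x * f - f * x = c • (z * l)) (hzy : Commute z y) (hly : QCommute q l y) :
    Commute x (f * y - q • (y * f)) := by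
  have leibniz : x * (f * y - q • (y * f)) - (f * y - q • (y * f)) * x =
      (x * f - f * x) * y - q • (y * (x * f - f * x)) +
        (f * (x * y - y * x) - q • ((x * y - y * x) * f)) := by
    simp only [mul_sub, sub_mul, smul_sub, mul_smul_comm, smul_mul_assoc, mul_assoc]
    abel
  unfold QCommute at hly
  refine sub_eq_zero.1 ?_
  rw [leibniz, hxy.eq, sub_self, mul_zero, zero_mul, smul_zero, sub_zero, add_zero, hxf,
    smul_mul_assoc, mul_smul_comm, mul_assoc, hly, mul_smul_comm, ← mul_assoc, hzy.eq,
    mul_assoc, smul_smul, smul_smul, mul_comm, sub_self]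

end QCommute

section Relations

variable {N : ℕ} {χ : Mz N → Mz N → ℂˣ}

theorem qCommute_elK_elE (a : Mz N) (i : Fin N) :
    QCommute (χ a (alphav i) : ℂ) (elK χ a) (elE χ i) := by
  simpa [QCommute, elK, elE] using RingQuot.mkAlgHom_rel ℂ (URel.KE (χ := χ) a i)

theorem qCommute_elL_elE (a : Mz N) (i : Fin N) :
    QCommute (χ (-alphav i) a : ℂ) (elL χ a) (elE χ i) := by
  simpa [QCommute, elL, elE] using RingQuot.mkAlgHom_rel ℂ (URel.LE (χ := χ) a i)

theorem qCommute_elL_elF (a : Mz N) (i : Fin N) :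
    QCommute (χ (alphav i) a : ℂ) (elL χ a) (elF χ i) := by
  simpa [QCommute, elL, elF] using RingQuot.mkAlgHom_rel ℂ (URel.LF (χ := χ) a i)

theorem elE_mul_elF_sub_elF_mul_elE (i j : Fin N) :
    elE χ i * elF χ j - elF χ j * elE χ i =
      if i = j then -elK χ (alphav i) + elL χ (alphav i) else 0 := by
  simpa [elE, elF, elK, elL, apply_ite] using RingQuot.mkAlgHom_rel ℂ (URel.EF (χ := χ) i j)

theorem commute_elE_elF {i j : Fin N} (h : i ≠ j) : Commute (elE χ i) (elF χ j) :=
  sub_eq_zero.1 ((elE_mul_elF_sub_elF_mul_elE i j).trans (if_neg h))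

end Relations

theorem IsBihom.val_neg_left_mul_val {N : ℕ} {χ : Mz N → Mz N → ℂˣ} (hχ : IsBihom χ)
    (a b : Mz N) : (χ (-a) b : ℂ) * χ a b = 1 := by
  have h0 : χ 0 b = 1 := by
    simpa using (hχ.2 0 0 b).symm
  rw [← Units.val_mul, ← hχ.2, neg_add_cancel, h0, Units.val_one]

section RootVectors

variable {N : ℕ} {χ : Mz N → Mz N → ℂˣ}

theorem qCommute_Ep {y : tU χ} {u v : ℂ} {i j : Fin N} (hi : QCommute u y (elE χ i))
    (hj : QCommute v y (elE χ j)) (m : ℕ) : QCommute (u ^ m * v) y (Ep χ i j m) :=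
  QCommute.of_recurrence (fun _ => rfl) hi hj m

theorem qCommute_Fp {y : tU χ} {u v : ℂ} {i k : Fin N} (hi : QCommute u y (elF χ i))
    (hk : QCommute v y (elF χ k)) (n : ℕ) : QCommute (u ^ n * v) y (Fp χ i k n) :=
  QCommute.of_recurrence (fun _ => rfl) hi hk n

theorem commute_elE_Fp {i j k : Fin N} (hji : j ≠ i) (hjk : j ≠ k) (n : ℕ) :
    Commute (elE χ j) (Fp χ i k n) :=
  Commute.of_recurrence (fun _ => rfl) (commute_elE_elF hji) (commute_elE_elF hjk) n

theorem commute_Ep_elF {i j k : Fin N} (hik : i ≠ k) (hjk : j ≠ k) (m : ℕ) :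
    Commute (Ep χ i j m) (elF χ k) :=
  (Commute.of_recurrence (fun _ => rfl) (commute_elE_elF hik).symm
    (commute_elE_elF hjk).symm m).symm

theorem Ep_succ_commutator_elF (i j : Fin N) (m : ℕ) :
    Ep χ i j (m + 1) * elF χ i - elF χ i * Ep χ i j (m + 1) =
      ((χ (-alphav i) (alphav i) : ℂ) ^ m * χ (-alphav j) (alphav i) -
          (χ (alphav i) (alphav i) : ℂ) ^ m * χ (alphav i) (alphav j)) •
        (Ep χ i j m * elL χ (alphav i)) +
      (elE χ i * (Ep χ i j m * elF χ i - elF χ i * Ep χ i j m) -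
        ((χ (alphav i) (alphav i) : ℂ) ^ m * χ (alphav i) (alphav j)) •
          ((Ep χ i j m * elF χ i - elF χ i * Ep χ i j m) * elE χ i)) :=
  commutator_sub_smul_mul_eq (by simpa using elE_mul_elF_sub_elF_mul_elE (χ := χ) i i)
    (qCommute_Ep (qCommute_elK_elE _ i) (qCommute_elK_elE _ j) m)
    (qCommute_Ep (qCommute_elL_elE _ i) (qCommute_elL_elE _ j) m)

theorem exists_Ep_succ_commutator_elF_eq_smul (hχ : IsBihom χ) {i j : Fin N} (hij : i ≠ j)
    (m : ℕ) :
    ∃ c : ℂ, Ep χ i j (m + 1) * elF χ i - elF χ i * Ep χ i j (m + 1) =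
      c • (Ep χ i j m * elL χ (alphav i)) := by
  induction m with
  | zero =>
    rw [Ep_succ_commutator_elF, show Ep χ i j 0 = elE χ j from rfl,
      (commute_elE_elF hij.symm).eq, sub_self, mul_zero, zero_mul, smul_zero, sub_zero, add_zero]
    exact ⟨_, rfl⟩
  | succ m ih =>
    obtain ⟨c, hc⟩ := ih
    set s : ℂ := (χ (alphav i) (alphav i) : ℂ) ^ m * χ (alphav i) (alphav j)
    have hs : ((χ (alphav i) (alphav i) : ℂ) ^ (m + 1) * χ (alphav i) (alphav j)) *
        χ (-alphav i) (alphav i) = s := by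
      linear_combination s * hχ.val_neg_left_mul_val (alphav i) (alphav i)
    have hLE : elL χ (alphav i) * elE χ i = (χ (-alphav i) (alphav i) : ℂ) •
        (elE χ i * elL χ (alphav i)) := qCommute_elL_elE _ i
    have hEL : elE χ i * (Ep χ i j m * elL χ (alphav i)) -
        ((χ (alphav i) (alphav i) : ℂ) ^ (m + 1) * χ (alphav i) (alphav j)) •
          (Ep χ i j m * elL χ (alphav i) * elE χ i) = Ep χ i j (m + 1) * elL χ (alphav i) := by
      rw [mul_assoc (Ep χ i j m), hLE, mul_smul_comm, smul_smul, hs, show Ep χ i j (m + 1) =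
        elE χ i * Ep χ i j m - s • (Ep χ i j m * elE χ i) from rfl]
      simp only [sub_mul, smul_mul_assoc, mul_assoc]
    refine ⟨(χ (-alphav i) (alphav i) : ℂ) ^ (m + 1) * χ (-alphav j) (alphav i) -
      (χ (alphav i) (alphav i) : ℂ) ^ (m + 1) * χ (alphav i) (alphav j) + c, ?_⟩
    rw [Ep_succ_commutator_elF, hc, add_smul, ← hEL, mul_smul_comm, smul_mul_assoc]
    module

end RootVectors

/-- In U~(chi): [E+_{m,a_i,a_j}, F+_{n,a_i,a_k}] = 0 for pairwise distinct i, j, k. -/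
theorem commutator_Ep_Fp_distinct {N : ℕ} (χ : Mz N → Mz N → ℂˣ) (hχ : IsBihom χ)
    (i j k : Fin N) (hij : i ≠ j) (hjk : j ≠ k) (hki : k ≠ i) (m n : ℕ) :
    Ep χ i j m * Fp χ i k n - Fp χ i k n * Ep χ i j m = 0 := by
  refine sub_eq_zero.2 (?_ : Commute (Ep χ i j m) (Fp χ i k n))
  induction m generalizing n with
  | zero => exact commute_elE_Fp hij.symm hjk n
  | succ m ihm =>
    induction n with
    | zero => exact commute_Ep_elF hki.symm hjk (m + 1)
    | succ n ihn =>
      obtain ⟨c, hc⟩ := exists_Ep_succ_commutator_elF_eq_smul hχ hij m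
      exact ihn.mul_sub_smul_mul hc (ihm n)
        (qCommute_Fp (qCommute_elL_elF _ i) (qCommute_elL_elF _ k) n)
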